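/- If f, g: ℕ → E(q) are q-holonomic sequences, then their sum f + g is q-holonomic. -/

import Mathlib

open scoped BigOperators

/-- A sequence `f : ℕ → E(q)` is `q`-holonomic if it satisfies a nontrivial linear
recursion `∑_{j=0}^d a_j(q, qⁿ) f(n+j) = 0` with coefficients `a_j ∈ E[u,v]`, not all zero. -/
def IsQHolonomic {E : Type} [Field E] (f : ℕ → RatFunc E) : Prop :=
  ∃ (d : ℕ) (a : ℕ → MvPolynomial (Fin 2) E),
    (∃ j ≤ d, a j ≠ 0) ∧
    ∀ n : ℕ, ∑ j ∈ Finset.range (d + 1),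
      (MvPolynomial.aeval ![RatFunc.X, (RatFunc.X : RatFunc E) ^ n] (a j)) * f (n + j) = 0

/-!
Let `G` be the ring of germs at infinity of sequences `ℕ → E(q)`. Sending `p ∈ E[u,v]` to the
germ of `n ↦ p(q, qⁿ)` inverts every nonzero `p`, since `p(q, T)` is a nonzero polynomial over
`E(q)` and the `qⁿ` are pairwise distinct; so `G` is a vector space over `K = Frac E[u,v]`.
A recurrence with nonzero leading coefficient puts every shift of `f` in the `K`-span of the first
`d` shifts, and conversely a `K`-linear relation among finitely many shifts, after clearing
denominators, is a recurrence valid for large `n`, which becomes valid for all `n` after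
multiplying by `∏_{i<N} (v - uⁱ)`. Hence `f` is `q`-holonomic iff its shifts span a
finite-dimensional `K`-subspace of `G`, and the shifts of `f + g` lie in the sum of the two spaces.
-/

open Filter Finset

theorem RatFunc.X_pow_injective {E : Type} [Field E] :
    Function.Injective fun n : ℕ => (RatFunc.X : RatFunc E) ^ n := by
  intro m n h
  have h' : (Polynomial.X ^ m : Polynomial E) = Polynomial.X ^ n :=
    RatFunc.algebraMap_injective E (by simpa [RatFunc.algebraMap_X] using h)
  simpa using congrArg Polynomial.natDegree h'

theorem MvPolynomial.aeval_C_X_X_injective {E : Type} [Field E] :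
    Function.Injective
      (MvPolynomial.aeval (R := E) ![Polynomial.C (RatFunc.X : RatFunc E), Polynomial.X]) := by
  have h : MvPolynomial.aeval (R := E) ![Polynomial.C (RatFunc.X : RatFunc E), Polynomial.X] =
      ((Polynomial.mapAlgHom (IsScalarTower.toAlgHom E (Polynomial E) (RatFunc E))).comp
        (Polynomial.mapAlgEquiv (MvPolynomial.uniqueAlgEquiv E (Fin 1))).toAlgHom).comp
        ((MvPolynomial.finSuccEquiv E 1).toAlgHom.comp
          (MvPolynomial.renameEquiv E (Equiv.swap 0 1)).toAlgHom) := by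
    refine MvPolynomial.algHom_ext fun i => ?_
    fin_cases i
    · have h1 : (MvPolynomial.X 1 : MvPolynomial (Fin 2) E) = MvPolynomial.X (Fin.succ 0) := rfl
      simp [h1, MvPolynomial.finSuccEquiv_X_succ, RatFunc.algebraMap_X]
    · simp [MvPolynomial.finSuccEquiv_X_zero]
  rw [h]
  simp only [AlgHom.coe_comp, AlgEquiv.coe_toAlgHom, Polynomial.coe_mapAlgHom]
  exact (Polynomial.map_injective _ (RatFunc.algebraMap_injective E)).comp
    ((AlgEquiv.injective _).comp ((AlgEquiv.injective _).comp (AlgEquiv.injective _)))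

theorem exists_sum_algebraMap_smul_eq_zero_of_not_linearIndependent
    {R K M ι : Type*} [CommRing R] [Field K] [Algebra R K] [IsFractionRing R K]
    [AddCommGroup M] [Module K M] {v : ι → M} (hv : ¬LinearIndependent K v) :
    ∃ (s : Finset ι) (p : ι → R), ∑ i ∈ s, algebraMap R K (p i) • v i = 0 ∧ ∃ i ∈ s, p i ≠ 0 := by
  obtain ⟨s, c, hc, i, hi, hci⟩ := not_linearIndependent_iff.1 hv
  obtain ⟨b, hb⟩ := IsLocalization.exist_integer_multiples (nonZeroDivisors R) s c
  choose! p hp using hb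
  have := (algebraMap R K).domain_nontrivial
  have hb0 : algebraMap R K b ≠ 0 := IsFractionRing.to_map_ne_zero_of_mem_nonZeroDivisors b.2
  refine ⟨s, p, ?_, i, hi, fun hpi => hci ?_⟩
  · calc ∑ i ∈ s, algebraMap R K (p i) • v i = algebraMap R K b • ∑ i ∈ s, c i • v i := by
          rw [smul_sum]
          refine sum_congr rfl fun j hj => ?_
          rw [hp j hj, Algebra.smul_def, mul_smul]
      _ = 0 := by rw [hc, smul_zero]
  · have := hp i hi
    rw [hpi, map_zero, Algebra.smul_def] at this
    exact (mul_eq_zero.1 this.symm).resolve_left hb0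

namespace IsQHolonomic

variable {E : Type} [Field E]

noncomputable abbrev qEval (n : ℕ) : MvPolynomial (Fin 2) E →ₐ[E] RatFunc E :=
  MvPolynomial.aeval ![RatFunc.X, RatFunc.X ^ n]

theorem qEval_eq_eval (n : ℕ) (p : MvPolynomial (Fin 2) E) :
    qEval n p = (MvPolynomial.aeval ![Polynomial.C RatFunc.X, Polynomial.X] p).eval
      ((RatFunc.X : RatFunc E) ^ n) := by
  rw [← Polynomial.coe_aeval_eq_eval,
    ← AlgHom.restrictScalars_apply E (Polynomial.aeval (RatFunc.X ^ n : RatFunc E)),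
    MvPolynomial.comp_aeval_apply]
  refine congrArg (MvPolynomial.aeval · p) (funext fun i => ?_)
  fin_cases i <;> simp

theorem finite_setOf_qEval_eq_zero {p : MvPolynomial (Fin 2) E} (hp : p ≠ 0) :
    {n | qEval n p = 0}.Finite := by
  have hP := (map_ne_zero_iff _ MvPolynomial.aeval_C_X_X_injective).2 hp
  refine ((Polynomial.finite_setOfPred_isRoot hP).preimage
    RatFunc.X_pow_injective.injOn).subset fun n hn => ?_
  simpa [← qEval_eq_eval] using hn

theorem eventually_qEval_ne_zero {p : MvPolynomial (Fin 2) E} (hp : p ≠ 0) :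
    ∀ᶠ n in atTop, qEval n p ≠ 0 := by
  rw [← Nat.cofinite_eq_atTop]
  exact (finite_setOf_qEval_eq_zero hp).eventually_cofinite_notMem

noncomputable def qShift (m : ℕ) : MvPolynomial (Fin 2) E →ₐ[E] MvPolynomial (Fin 2) E :=
  MvPolynomial.aeval ![MvPolynomial.X 0, MvPolynomial.X 0 ^ m * MvPolynomial.X 1]

theorem qEval_qShift (m n : ℕ) (p : MvPolynomial (Fin 2) E) :
    qEval n (qShift m p) = qEval (n + m) p := by
  rw [qShift, MvPolynomial.comp_aeval_apply]
  refine congrArg (MvPolynomial.aeval · p) (funext fun i => ?_)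
  fin_cases i <;> simp [pow_add, mul_comm]

theorem qShift_ne_zero (m : ℕ) {p : MvPolynomial (Fin 2) E} (hp : p ≠ 0) : qShift m p ≠ 0 := by
  obtain ⟨n, hn⟩ := ((tendsto_add_atTop_nat m).eventually (eventually_qEval_ne_zero hp)).exists
  intro h
  rw [← qEval_qShift, h, map_zero] at hn
  exact hn rfl

noncomputable def germEval : MvPolynomial (Fin 2) E →+* Germ (atTop : Filter ℕ) (RatFunc E) :=
  (Germ.coeRingHom atTop).comp (RingHom.pi fun n => (qEval n).toRingHom)

theorem isUnit_germEval {p : MvPolynomial (Fin 2) E} (hp : p ≠ 0) : IsUnit (germEval p) := by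
  refine IsUnit.of_mul_eq_one (Germ.ofFun fun n => (qEval n p)⁻¹) ?_
  show (Germ.ofFun fun n => qEval n p) * _ = 1
  rw [← Germ.coe_mul, ← Germ.coe_one, Germ.coe_eq]
  filter_upwards [eventually_qEval_ne_zero hp] with n hn using mul_inv_cancel₀ hn

/-- The field `E(q, M)` of the paper, `u` standing for `q` and `v` for `M = qⁿ`. -/
abbrev CoeffField (E : Type) [Field E] := FractionRing (MvPolynomial (Fin 2) E)

noncomputable def germLift : CoeffField E →+* Germ (atTop : Filter ℕ) (RatFunc E) :=
  IsLocalization.lift fun p : nonZeroDivisors _ => isUnit_germEval (nonZeroDivisors.ne_zero p.2)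

noncomputable abbrev germModule : Module (CoeffField E) (Germ (atTop : Filter ℕ) (RatFunc E)) :=
  Module.compHom _ germLift

end IsQHolonomic

attribute [local instance] IsQHolonomic.germModule

namespace IsQHolonomic

variable {E : Type} [Field E]

def shiftGerm (f : ℕ → RatFunc E) (m : ℕ) : Germ (atTop : Filter ℕ) (RatFunc E) :=
  ↑fun n => f (n + m)

theorem sum_smul_shiftGerm {ι : Type*} (s : Finset ι) (c : ι → MvPolynomial (Fin 2) E)
    (t : ι → ℕ) (f : ℕ → RatFunc E) :
    ∑ i ∈ s, algebraMap _ (CoeffField E) (c i) • shiftGerm f (t i) =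
      ↑fun n => ∑ i ∈ s, qEval n (c i) * f (n + t i) := by
  have h (i : ι) : algebraMap _ (CoeffField E) (c i) • shiftGerm f (t i) =
      (↑fun n => qEval n (c i) * f (n + t i) : Germ atTop (RatFunc E)) := by
    show germLift (algebraMap _ _ (c i)) * _ = _
    rw [germLift, IsLocalization.lift_eq]
    rfl
  simp_rw [h, ← Finset.sum_fn]
  exact (map_sum (Germ.coeAddHom (atTop : Filter ℕ) (M := RatFunc E)) _ s).symm

theorem sum_smul_shiftGerm_eq_zero {f : ℕ → RatFunc E} {d : ℕ} {a : ℕ → MvPolynomial (Fin 2) E}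
    (hrec : ∀ n, ∑ j ∈ range (d + 1), qEval n (a j) * f (n + j) = 0) (t : ℕ) :
    ∑ j ∈ range (d + 1), algebraMap _ (CoeffField E) (qShift t (a j)) • shiftGerm f (t + j) = 0 := by
  rw [sum_smul_shiftGerm, ← Germ.coe_zero]
  congr 1
  funext n
  simp_rw [qEval_qShift, ← add_assoc]
  exact hrec (n + t)

theorem shiftGerm_mem_span {f : ℕ → RatFunc E} {d : ℕ} {a : ℕ → MvPolynomial (Fin 2) E}
    (had : a d ≠ 0) (hrec : ∀ n, ∑ j ∈ range (d + 1), qEval n (a j) * f (n + j) = 0) (m : ℕ) :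
    shiftGerm f m ∈ Submodule.span (CoeffField E) (shiftGerm f '' Set.Iio d) := by
  induction m using Nat.strong_induction_on with
  | _ m ih =>
    rcases lt_or_ge m d with hm | hm
    · exact Submodule.subset_span ⟨m, hm, rfl⟩
    obtain ⟨t, rfl⟩ := Nat.exists_eq_add_of_le' hm
    have hc : algebraMap _ (CoeffField E) (qShift t (a d)) ≠ 0 :=
      fun h => qShift_ne_zero t had (IsFractionRing.to_map_eq_zero_iff.1 h)
    have hrel := sum_smul_shiftGerm_eq_zero hrec t
    rw [sum_range_succ, add_eq_zero_iff_eq_neg'] at hrel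
    rw [← Submodule.smul_mem_iff _ hc, hrel]
    refine Submodule.neg_mem _ (Submodule.sum_mem _ fun j hj => Submodule.smul_mem _ _ (ih _ ?_))
    have := mem_range.1 hj
    omega

theorem exists_recurrence_leading_ne_zero {f : ℕ → RatFunc E} (hf : IsQHolonomic f) :
    ∃ (d : ℕ) (a : ℕ → MvPolynomial (Fin 2) E), a d ≠ 0 ∧
      ∀ n, ∑ j ∈ range (d + 1), qEval n (a j) * f (n + j) = 0 := by
  classical
  obtain ⟨d, a, ⟨j, hjd, hj⟩, hrec⟩ := hf
  have hle := Nat.findGreatest_le (P := fun j => a j ≠ 0) d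
  refine ⟨_, a, Nat.findGreatest_spec (P := fun j => a j ≠ 0) hjd hj, fun n => ?_⟩
  rw [← hrec n]
  refine sum_subset (range_subset_range.2 (by omega)) fun k hk hke => ?_
  rw [mem_range] at hk hke
  have hak := Nat.findGreatest_is_greatest (P := fun j => a j ≠ 0) (n := d) (k := k)
    (by omega) (by omega)
  rw [not_not.1 hak, map_zero, zero_mul]

theorem of_eventually {f : ℕ → RatFunc E} {s : Finset ℕ} {a : ℕ → MvPolynomial (Fin 2) E}
    (ha : ∃ j ∈ s, a j ≠ 0) (hrec : ∀ᶠ n in atTop, ∑ j ∈ s, qEval n (a j) * f (n + j) = 0) :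
    IsQHolonomic f := by
  classical
  obtain ⟨N, hN⟩ := eventually_atTop.1 hrec
  -- `Q(q, qⁿ) = ∏_{i<N} (qⁿ - qⁱ)` kills the first `N` equations and no later one
  set Q : MvPolynomial (Fin 2) E := ∏ i ∈ range N, (MvPolynomial.X 1 - MvPolynomial.X 0 ^ i)
  have hQ : ∀ n < N, qEval n Q = 0 := fun n hn => by
    rw [map_prod]
    exact prod_eq_zero (mem_range.2 hn) (by simp)
  have hQ0 : Q ≠ 0 := by
    have : qEval N Q ≠ 0 := by
      rw [map_prod]
      refine prod_ne_zero_iff.2 fun i hi => ?_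
      simpa [sub_eq_zero] using RatFunc.X_pow_injective.ne (mem_range.1 hi).ne'
    exact fun h => this (by rw [h, map_zero])
  obtain ⟨j, hjs, hj⟩ := ha
  have hs : s ⊆ range (s.sup id + 1) := fun i hi =>
    mem_range.2 (Nat.lt_succ_of_le (le_sup (f := id) hi))
  refine ⟨s.sup id, fun i => if i ∈ s then Q * a i else 0,
    ⟨j, le_sup (f := id) hjs, by simp [hjs, hQ0, hj]⟩, fun n => ?_⟩
  simp only [apply_ite (qEval n), map_zero, ite_mul, zero_mul, sum_ite_mem,
    inter_eq_right.2 hs, map_mul, mul_assoc, ← mul_sum]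
  rcases lt_or_ge n N with hn | hn
  · rw [hQ n hn, zero_mul]
  · rw [hN n hn, mul_zero]

theorem iff_finiteDimensional {f : ℕ → RatFunc E} :
    IsQHolonomic f ↔
      FiniteDimensional (CoeffField E) (Submodule.span (CoeffField E) (Set.range (shiftGerm f))) := by
  constructor
  · intro hf
    obtain ⟨d, a, had, hrec⟩ := exists_recurrence_leading_ne_zero hf
    have := FiniteDimensional.span_of_finite (CoeffField E) ((Set.finite_Iio d).image (shiftGerm f))
    refine Submodule.finiteDimensional_of_le
      (S₂ := Submodule.span _ (shiftGerm f '' Set.Iio d)) (Submodule.span_le.2 ?_)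
    rintro _ ⟨m, rfl⟩
    exact shiftGerm_mem_span had hrec m
  · intro h
    have hdep : ¬LinearIndependent (CoeffField E) (shiftGerm f) := fun hli =>
      have := (linearIndependent_span hli).finite
      not_finite ℕ
    obtain ⟨s, p, hsum, hp⟩ := exists_sum_algebraMap_smul_eq_zero_of_not_linearIndependent
      (R := MvPolynomial (Fin 2) E) hdep
    have hrel := (sum_smul_shiftGerm s p (fun i => i) f).symm.trans hsum
    rw [← Germ.coe_zero, Germ.coe_eq] at hrel
    exact of_eventually hp hrel

theorem span_shiftGerm_add_le (f g : ℕ → RatFunc E) :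
    Submodule.span (CoeffField E) (Set.range (shiftGerm (f + g))) ≤
      Submodule.span (CoeffField E) (Set.range (shiftGerm f)) ⊔
        Submodule.span (CoeffField E) (Set.range (shiftGerm g)) := by
  refine Submodule.span_le.2 ?_
  rintro _ ⟨m, rfl⟩
  exact Submodule.add_mem_sup (Submodule.subset_span (Set.mem_range_self m))
    (Submodule.subset_span (Set.mem_range_self m))

end IsQHolonomic

theorem IsQHolonomic.add_general {E : Type} [Field E] {f g : ℕ → RatFunc E}
    (hf : IsQHolonomic f) (hg : IsQHolonomic g) : IsQHolonomic (f + g) := by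
  rw [IsQHolonomic.iff_finiteDimensional] at hf hg ⊢
  exact Submodule.finiteDimensional_of_le (IsQHolonomic.span_shiftGerm_add_le f g)

/-- The sum of two `q`-holonomic sequences is `q`-holonomic. -/
theorem IsQHolonomic.add {E : Type} [Field E] [CharZero E] {f g : ℕ → RatFunc E}
    (hf : IsQHolonomic f) (hg : IsQHolonomic g) : IsQHolonomic (f + g) :=
  IsQHolonomic.add_general hf hg
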